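/- Let $0 < \sigma < 1$ and let $b = (b_m)_{m \ge 1}$ be a sequence of nonnegative reals. Then the sequence $\left(\frac{|\nu|!}{\nu!} b^\nu\right)_{\nu \in \mathcal{F}}$ belongs to $\ell^\sigma(\mathcal{F})$ if and only if $\sum_{m \ge 1} b_m < 1$ and $(b_m) \in \ell^\sigma(\mathbb{N})$. -/

import Mathlib

/-!
Write `T_b(ν) = (|ν|!/ν!) b^ν` (`multinomialTerm b ν`). Necessity: `T_b(eᵢ) = bᵢ` gives
`(bᵢ) ∈ ℓ^σ`. For a finite set `E`, the multinomial theorem and subadditivity of `x ↦ x^σ` give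
`((∑_E b)^σ)^n ≤ ∑_{|ν| = n, supp ν ⊆ E} T_b(ν)^σ`, so the geometric series of `(∑_E b)^σ` is
bounded by `S = ∑_ν T_b(ν)^σ`, whence `∑_E b ≤ (∑_E b)^σ ≤ 1 - 1/S` uniformly in `E`.

Sufficiency: splitting `ν` along a finite set `s` and its complement, `|ν|!/ν!` is the binomial
coefficient `C(|ν|, |ν_s|)` times the two partial multinomial coefficients, and
`C(p+q, p) θ^p (1-θ)^q ≤ 1`; hence `T_b(ν) ≤ T_{b/θ}(ν_s) T_{b/(1-θ)}(ν_{sᶜ})`, and the two factors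
can be summed separately. Take `∑ b < θ < 1` and `s` so large that `∑_{sᶜ} b^σ < (1-θ)^σ`. The
factor off `s` is summable by `T_c^σ ≤ T_{c^σ}` and the `ℓ¹` criterion
`∑_ν T_c(ν) = ∑_n (∑ c)^n < ∞` for `∑ c < 1`; the factor on `s` has finite support and is
handled by induction on `s`, splitting off one coordinate at a time.
-/

open Finset Function

variable {ι : Type*}

noncomputable def multinomialTerm (b : ι → ℝ) (ν : ι →₀ ℕ) : ℝ :=
  ((ν.sum fun _ n => n).factorial : ℝ) / (ν.prod fun _ n => (n.factorial : ℝ)) *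
    ν.prod fun j n => b j ^ n

lemma Finsupp.prod_factorial_pos (ν : ι →₀ ℕ) : (0 : ℝ) < ν.prod fun _ n => (n.factorial : ℝ) :=
  prod_pos fun _ _ => by positivity

section Algebra

variable (b : ι → ℝ) (ν : ι →₀ ℕ)

lemma multinomialTerm_eq : multinomialTerm b ν = ν.multinomial * ν.prod fun i n => b i ^ n := by
  have hspec := Nat.multinomial_spec ν.support ν
  rw [multinomialTerm, Finsupp.multinomial_eq]
  congr 1
  rw [div_eq_iff ν.prod_factorial_pos.ne', mul_comm, Finsupp.prod, Finsupp.sum, ← hspec]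
  push_cast
  rfl

lemma multinomialTerm_eq_of_support_subset {s : Finset ι} (h : ν.support ⊆ s) :
    multinomialTerm b ν = Nat.multinomial s ν * ∏ i ∈ s, b i ^ ν i := by
  rw [multinomialTerm_eq, Finsupp.multinomial_eq_of_support_subset h,
    Finsupp.prod_of_support_subset ν h _ fun _ _ => pow_zero _]

lemma multinomialTerm_zero : multinomialTerm b 0 = 1 := by
  simp [multinomialTerm]

lemma multinomialTerm_single_one (i : ι) : multinomialTerm b (Finsupp.single i 1) = b i := by
  simp [multinomialTerm]

variable {b} in
lemma multinomialTerm_congr {c : ι → ℝ} (h : ∀ i ∈ ν.support, b i = c i) :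
    multinomialTerm b ν = multinomialTerm c ν := by
  simp only [multinomialTerm_eq]
  congr 1
  exact Finsupp.prod_congr fun i hi => by rw [h i hi]

lemma multinomialTerm_div (t : ℝ) :
    multinomialTerm (fun i => b i / t) ν = multinomialTerm b ν / t ^ (ν.sum fun _ n => n) := by
  simp only [multinomialTerm_eq, div_pow, Finsupp.prod, Finset.prod_div_distrib,
    Finset.prod_pow_eq_pow_sum, Finsupp.sum, mul_div_assoc]

lemma sum_finsuppAntidiag_multinomialTerm [DecidableEq ι] (s : Finset ι) (n : ℕ) :
    ∑ ν ∈ s.finsuppAntidiag n, multinomialTerm b ν = (∑ i ∈ s, b i) ^ n := by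
  rw [sum_pow_eq_sum_piAntidiag, finsuppAntidiag, sum_map, ← sum_attach (piAntidiag s n)]
  refine sum_congr rfl fun k _ => ?_
  rw [multinomialTerm_eq_of_support_subset _ _ (s := s)]
  · rfl
  · simp

lemma multinomialTerm_eq_choose_mul (p : ι → Prop) [DecidablePred p] :
    multinomialTerm b ν =
      (((ν.filter p).sum fun _ n => n) + ((ν.filter (¬ p ·)).sum fun _ n => n)).choose
          ((ν.filter p).sum fun _ n => n) *
        multinomialTerm b (ν.filter p) * multinomialTerm b (ν.filter (¬ p ·)) := by
  have hchoose := Nat.add_choose_mul_factorial_mul_factorial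
    ((ν.filter p).sum fun _ n => n) ((ν.filter (¬ p ·)).sum fun _ n => n)
  rw [← Nat.choose_symm_add] at hchoose
  have hdeg := Finsupp.sum_filter_add_sum_filter_not (f := ν) (p := p) fun _ n => n
  have hfac := Finsupp.prod_filter_mul_prod_filter_not (f := ν) (p := p)
    fun _ n => (n.factorial : ℝ)
  have hpow := Finsupp.prod_filter_mul_prod_filter_not (f := ν) (p := p) fun j n => b j ^ n
  have := (ν.filter p).prod_factorial_pos
  have := (ν.filter (¬ p ·)).prod_factorial_pos
  rw [multinomialTerm, multinomialTerm, multinomialTerm, ← hdeg, ← hfac, ← hpow, ← hchoose]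
  push_cast
  field_simp

end Algebra

lemma multinomialTerm_nonneg {b : ι → ℝ} (hb : ∀ i, 0 ≤ b i) (ν : ι →₀ ℕ) :
    0 ≤ multinomialTerm b ν := by
  rw [multinomialTerm_eq]
  exact mul_nonneg (Nat.cast_nonneg _) (prod_nonneg fun i _ => pow_nonneg (hb i) _)

lemma Real.rpow_sum_le_sum_rpow {s : Finset ι} {f : ι → ℝ} (hf : ∀ i ∈ s, 0 ≤ f i) {σ : ℝ}
    (hσ0 : 0 < σ) (hσ1 : σ ≤ 1) : (∑ i ∈ s, f i) ^ σ ≤ ∑ i ∈ s, f i ^ σ :=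
  Finset.le_sum_of_subadditive_on_pred (· ^ σ) (0 ≤ ·) (Real.zero_rpow hσ0.ne').le
    (fun _ _ hx hy => Real.rpow_add_le_add_rpow hx hy hσ0.le hσ1) (fun _ _ => add_nonneg) f hf

lemma choose_mul_pow_mul_pow_le_one {θ : ℝ} (hθ0 : 0 ≤ θ) (hθ1 : θ ≤ 1) (p q : ℕ) :
    ((p + q).choose p : ℝ) * θ ^ p * (1 - θ) ^ q ≤ 1 := by
  have h1θ : 0 ≤ 1 - θ := by linarith
  have hsum := add_pow θ (1 - θ) (p + q)
  rw [add_sub_cancel, one_pow] at hsum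
  calc ((p + q).choose p : ℝ) * θ ^ p * (1 - θ) ^ q
      = θ ^ p * (1 - θ) ^ (p + q - p) * ((p + q).choose p : ℝ) := by
        rw [Nat.add_sub_cancel_left]; ring
    _ ≤ ∑ m ∈ range (p + q + 1), θ ^ m * (1 - θ) ^ (p + q - m) * ((p + q).choose m : ℝ) :=
        single_le_sum (f := fun m => θ ^ m * (1 - θ) ^ (p + q - m) * ((p + q).choose m : ℝ))
          (fun m _ => by positivity) (mem_range.2 (by omega))
    _ = 1 := hsum.symm

lemma Summable.of_rpow {b : ι → ℝ} (hb : ∀ i, 0 ≤ b i) {σ : ℝ} (hσ0 : 0 < σ) (hσ1 : σ ≤ 1)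
    (h : Summable fun i => b i ^ σ) : Summable b := by
  refine h.of_norm_bounded_eventually ?_
  filter_upwards [h.tendsto_cofinite_zero.eventually (gt_mem_nhds one_pos)] with i hi
  have hbi : b i ≤ 1 := by
    by_contra! hlt
    exact (Real.one_lt_rpow hlt hσ0).not_gt hi
  rw [Real.norm_of_nonneg (hb i)]
  exact Real.self_le_rpow_of_le_one (hb i) hbi hσ1

lemma le_one_sub_inv_of_sum_range_pow_le {r T : ℝ} (hr : 0 ≤ r)
    (h : ∀ N, ∑ n ∈ range N, r ^ n ≤ T) : r ≤ 1 - T⁻¹ := by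
  have hgeom : Summable (r ^ ·) := summable_of_sum_range_le (fun n => pow_nonneg hr n) h
  have hr1 : r < 1 := by
    simpa [abs_of_nonneg hr] using summable_geometric_iff_norm_lt_one.1 hgeom
  have hT : (1 - r)⁻¹ ≤ T := by
    rw [← tsum_geometric_of_lt_one hr hr1]
    exact hgeom.tsum_le_of_sum_range_le h
  have := inv_anti₀ (by positivity) hT
  rw [inv_inv] at this
  linarith

section Antidiagonals

variable [DecidableEq ι]

lemma pairwise_disjoint_finsuppAntidiag (s : Finset ι) :
    Pairwise (Disjoint on (s.finsuppAntidiag : ℕ → Finset (ι →₀ ℕ))) := by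
  intro m n hmn
  rw [Function.onFun_apply, Finset.disjoint_left]
  intro ν hm hn
  exact hmn ((mem_finsuppAntidiag.1 hm).1.symm.trans (mem_finsuppAntidiag.1 hn).1)

lemma sum_range_sum_finsuppAntidiag_le_tsum {f : (ι →₀ ℕ) → ℝ} (hf : ∀ ν, 0 ≤ f ν)
    (hsum : Summable f) (s : Finset ι) (N : ℕ) :
    ∑ n ∈ range N, ∑ ν ∈ s.finsuppAntidiag n, f ν ≤ ∑' ν, f ν := by
  rw [← sum_biUnion ((pairwise_disjoint_finsuppAntidiag s).set_pairwise _)]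
  exact hsum.sum_le_tsum _ fun ν _ => hf ν

lemma exists_sum_le_sum_range_sum_finsuppAntidiag {f : (ι →₀ ℕ) → ℝ} (hf : ∀ ν, 0 ≤ f ν)
    (u : Finset (ι →₀ ℕ)) :
    ∃ (s : Finset ι) (N : ℕ), ∑ ν ∈ u, f ν ≤ ∑ n ∈ range N, ∑ ν ∈ s.finsuppAntidiag n, f ν := by
  refine ⟨u.sup Finsupp.support, u.sup (fun ν => ν.sum fun _ n => n) + 1, ?_⟩
  rw [← sum_biUnion ((pairwise_disjoint_finsuppAntidiag _).set_pairwise _)]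
  refine sum_le_sum_of_subset_of_nonneg (fun ν hν => ?_) fun ν _ _ => hf ν
  have hsupp : ν.support ⊆ u.sup Finsupp.support := le_sup hν
  rw [mem_biUnion]
  have hdeg : (ν.sum fun _ n => n) ≤ u.sup fun ν => ν.sum fun _ n => n :=
    le_sup (f := fun ν => ν.sum fun _ n => n) hν
  exact ⟨_, mem_range.2 (Nat.lt_succ_of_le hdeg), mem_finsuppAntidiag'.2 ⟨rfl, hsupp⟩⟩

end Antidiagonals

lemma multinomialTerm_rpow_le {b : ι → ℝ} (hb : ∀ i, 0 ≤ b i) {σ : ℝ} (hσ1 : σ ≤ 1)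
    (ν : ι →₀ ℕ) :
    multinomialTerm b ν ^ σ ≤ multinomialTerm (fun i => b i ^ σ) ν := by
  have hcoeff : (1 : ℝ) ≤ ν.multinomial := by
    rw [Finsupp.multinomial_eq]
    exact_mod_cast Nat.multinomial_pos _ _
  have hprod : (ν.prod fun i n => b i ^ n) ^ σ = ν.prod fun i n => (b i ^ σ) ^ n := by
    rw [Finsupp.prod, Finsupp.prod, ← Real.finsetProd_rpow _ _ fun i _ => pow_nonneg (hb i) _]
    exact prod_congr rfl fun i _ => (Real.rpow_pow_comm (hb i) σ (ν i)).symm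
  have hP : 0 ≤ ν.prod fun i n => b i ^ n := prod_nonneg fun i _ => pow_nonneg (hb i) _
  rw [multinomialTerm_eq, multinomialTerm_eq, Real.mul_rpow (by positivity) hP, hprod]
  exact mul_le_mul_of_nonneg_right (Real.rpow_le_self_of_one_le hcoeff hσ1)
    (prod_nonneg fun i _ => pow_nonneg (Real.rpow_nonneg (hb i) σ) _)

lemma summable_multinomialTerm {b : ι → ℝ} (hb : ∀ i, 0 ≤ b i) (hs : Summable b)
    (h1 : ∑' i, b i < 1) : Summable (multinomialTerm b) := by
  classical
  have hA : 0 ≤ ∑' i, b i := tsum_nonneg hb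
  refine summable_of_sum_le (c := (1 - ∑' i, b i)⁻¹) (multinomialTerm_nonneg hb) fun u => ?_
  obtain ⟨s, N, hu⟩ := exists_sum_le_sum_range_sum_finsuppAntidiag (multinomialTerm_nonneg hb) u
  calc ∑ ν ∈ u, multinomialTerm b ν
      ≤ ∑ n ∈ range N, (∑ i ∈ s, b i) ^ n := by
          simpa only [sum_finsuppAntidiag_multinomialTerm] using hu
    _ ≤ ∑ n ∈ range N, (∑' i, b i) ^ n := by
        gcongr with n
        · exact sum_nonneg fun i _ => hb i
        · exact hs.sum_le_tsum s fun i _ => hb i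
    _ ≤ (1 - ∑' i, b i)⁻¹ := by
        simpa [← Finset.range_eq_Ico] using geom_sum_Ico_le_of_lt_one (m := 0) (n := N) hA h1

lemma summable_multinomialTerm_rpow_of_tsum_rpow_lt_one {b : ι → ℝ} (hb : ∀ i, 0 ≤ b i)
    {σ : ℝ} (hσ1 : σ ≤ 1) (hs : Summable fun i => b i ^ σ)
    (h1 : ∑' i, b i ^ σ < 1) : Summable fun ν => multinomialTerm b ν ^ σ :=
  (summable_multinomialTerm (fun i => Real.rpow_nonneg (hb i) σ) hs h1).of_nonneg_of_le
    (fun ν => Real.rpow_nonneg (multinomialTerm_nonneg hb ν) σ)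
    (multinomialTerm_rpow_le hb hσ1)

section Splitting

variable [DecidableEq ι] {b : ι → ℝ} (s : Finset ι) {θ : ℝ}

lemma multinomialTerm_le_mul_filter (hb : ∀ i, 0 ≤ b i) (hθ0 : 0 < θ) (hθ1 : θ < 1)
    (ν : ι →₀ ℕ) :
    multinomialTerm b ν ≤
      multinomialTerm (fun i => if i ∈ s then b i / θ else 0) (ν.filter (· ∈ s)) *
        multinomialTerm (fun i => if i ∈ s then 0 else b i / (1 - θ)) (ν.filter (· ∉ s)) := by
  set μ := ν.filter (· ∈ s)
  set τ := ν.filter (· ∉ s)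
  set p := μ.sum fun _ n => n
  set q := τ.sum fun _ n => n
  have h₁ : multinomialTerm (fun i => if i ∈ s then b i / θ else 0) μ =
      multinomialTerm b μ / θ ^ p := by
    rw [← multinomialTerm_div]
    refine multinomialTerm_congr _ fun i hi => ?_
    rw [Finsupp.support_filter, mem_filter] at hi
    rw [if_pos hi.2]
  have h₂ : multinomialTerm (fun i => if i ∈ s then 0 else b i / (1 - θ)) τ =
      multinomialTerm b τ / (1 - θ) ^ q := by
    rw [← multinomialTerm_div]
    refine multinomialTerm_congr _ fun i hi => ?_
    rw [Finsupp.support_filter, mem_filter] at hi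
    rw [if_neg hi.2]
  have h1θ : 0 < 1 - θ := by linarith
  have hμ := multinomialTerm_nonneg hb μ
  have hτ := multinomialTerm_nonneg hb τ
  rw [h₁, h₂, multinomialTerm_eq_choose_mul b ν (· ∈ s)]
  calc ((p + q).choose p : ℝ) * multinomialTerm b μ * multinomialTerm b τ
      = ((p + q).choose p * θ ^ p * (1 - θ) ^ q) *
          (multinomialTerm b μ / θ ^ p * (multinomialTerm b τ / (1 - θ) ^ q)) := by
        field_simp
    _ ≤ 1 * (multinomialTerm b μ / θ ^ p * (multinomialTerm b τ / (1 - θ) ^ q)) := by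
        gcongr
        exact choose_mul_pow_mul_pow_le_one hθ0.le hθ1.le p q
    _ = _ := one_mul _

lemma summable_multinomialTerm_rpow_of_split (hb : ∀ i, 0 ≤ b i) {σ : ℝ} (hσ : 0 ≤ σ)
    (hθ0 : 0 < θ) (hθ1 : θ < 1)
    (h₁ : Summable fun μ =>
      multinomialTerm (fun i => if i ∈ s then b i / θ else 0) μ ^ σ)
    (h₂ : Summable fun τ =>
      multinomialTerm (fun i => if i ∈ s then 0 else b i / (1 - θ)) τ ^ σ) :
    Summable fun ν => multinomialTerm b ν ^ σ := by
  have hc₁ : ∀ i, 0 ≤ if i ∈ s then b i / θ else 0 := fun i => by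
    split_ifs <;> positivity [hb i]
  have hc₂ : ∀ i, 0 ≤ if i ∈ s then 0 else b i / (1 - θ) := fun i => by
    have : 0 < 1 - θ := by linarith
    split_ifs <;> positivity [hb i]
  have hinj : Injective fun ν : ι →₀ ℕ => (ν.filter (· ∈ s), ν.filter (· ∉ s)) :=
    fun ν ν' h => by
      rw [← Finsupp.filter_add_filter_not ν (· ∈ s), ← Finsupp.filter_add_filter_not ν' (· ∈ s)]
      rw [Prod.mk.injEq] at h
      rw [h.1, h.2]
  have hprod := h₁.mul_of_nonneg h₂ (fun μ => Real.rpow_nonneg (multinomialTerm_nonneg hc₁ μ) σ)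
    (fun τ => Real.rpow_nonneg (multinomialTerm_nonneg hc₂ τ) σ)
  refine (hprod.comp_injective hinj).of_nonneg_of_le
    (fun ν => Real.rpow_nonneg (multinomialTerm_nonneg hb ν) σ) fun ν => ?_
  rw [comp_apply, ← Real.mul_rpow (multinomialTerm_nonneg hc₁ _) (multinomialTerm_nonneg hc₂ _)]
  exact Real.rpow_le_rpow (multinomialTerm_nonneg hb ν)
    (multinomialTerm_le_mul_filter s hb hθ0 hθ1 ν) hσ

end Splitting

lemma summable_multinomialTerm_rpow_of_support_subset [DecidableEq ι] {σ : ℝ} (hσ0 : 0 < σ)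
    (hσ1 : σ ≤ 1) (s : Finset ι) {b : ι → ℝ} (hb : ∀ i, 0 ≤ b i) (hbs : ∀ i ∉ s, b i = 0)
    (h1 : ∑ i ∈ s, b i < 1) : Summable fun ν => multinomialTerm b ν ^ σ := by
  induction s using Finset.induction_on generalizing b with
  | empty =>
    have hb0 : ∀ i, b i ^ σ = 0 := fun i => by rw [hbs i (notMem_empty i), Real.zero_rpow hσ0.ne']
    exact summable_multinomialTerm_rpow_of_tsum_rpow_lt_one hb hσ1 (by simp [hb0])
      (by simp [hb0])
  | insert a s ha ih =>
    rw [sum_insert ha] at h1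
    have hsum : 0 ≤ ∑ i ∈ s, b i := sum_nonneg fun i _ => hb i
    obtain ⟨θ, hsθ, hθa⟩ := exists_between (lt_sub_iff_add_lt'.2 h1)
    have hθ0 : 0 < θ := hsum.trans_lt hsθ
    have h1θ : 0 < 1 - θ := by linarith [hb a]
    refine summable_multinomialTerm_rpow_of_split s hb hσ0.le hθ0 (by linarith) ?_ ?_
    · refine ih (fun i => by split_ifs <;> positivity [hb i]) (fun i hi => if_neg hi) ?_
      rw [sum_congr rfl fun i hi => if_pos hi, ← sum_div, div_lt_one hθ0]
      linarith
    · have hc : ∀ i ≠ a, (if i ∈ s then 0 else b i / (1 - θ)) ^ σ = 0 := fun i hi => by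
        split_ifs with his
        · exact Real.zero_rpow hσ0.ne'
        · rw [hbs i (by simp [hi, his]), zero_div, Real.zero_rpow hσ0.ne']
      refine summable_multinomialTerm_rpow_of_tsum_rpow_lt_one
        (fun i => by split_ifs <;> positivity [hb i]) hσ1
        (summable_of_ne_finset_zero (s := {a}) fun i hi => hc i (notMem_singleton.1 hi)) ?_
      rw [tsum_eq_single a hc, if_neg ha]
      exact Real.rpow_lt_one (by positivity [hb a]) ((div_lt_one h1θ).2 (by linarith)) hσ0

lemma summable_multinomialTerm_rpow {b : ι → ℝ} (hb : ∀ i, 0 ≤ b i) {σ : ℝ} (hσ0 : 0 < σ)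
    (hσ1 : σ ≤ 1) (h1 : ∑' i, b i < 1) (hσ : Summable fun i => b i ^ σ) :
    Summable fun ν => multinomialTerm b ν ^ σ := by
  classical
  obtain ⟨θ, hBθ, hθ1⟩ := exists_between h1
  have hθ0 : 0 < θ := (tsum_nonneg hb).trans_lt hBθ
  have h1θ : 0 < 1 - θ := by linarith
  obtain ⟨s, hs_tail⟩ := ((tendsto_tsum_compl_atTop_zero fun i => b i ^ σ).eventually
    (gt_mem_nhds (Real.rpow_pos_of_pos h1θ σ))).exists
  refine summable_multinomialTerm_rpow_of_split s hb hσ0.le hθ0 (by linarith) ?_ ?_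
  · refine summable_multinomialTerm_rpow_of_support_subset hσ0 hσ1 s
      (fun i => by split_ifs <;> positivity [hb i]) (fun i hi => if_neg hi) ?_
    rw [sum_congr rfl fun i hi => if_pos hi, ← sum_div, div_lt_one hθ0]
    exact ((hσ.of_rpow hb hσ0 hσ1).sum_le_tsum s fun i _ => hb i).trans_lt (by linarith)
  · have hc : ∀ i, (if i ∈ s then 0 else b i / (1 - θ)) ^ σ =
        Set.indicator {i | i ∉ s} (fun i => b i ^ σ) i / (1 - θ) ^ σ := fun i => by
      by_cases his : i ∈ s
      · simp [his, Real.zero_rpow hσ0.ne']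
      · simp [his, Real.div_rpow (hb i) h1θ.le]
    refine summable_multinomialTerm_rpow_of_tsum_rpow_lt_one
      (fun i => by split_ifs <;> positivity [hb i]) hσ1 ?_ ?_
    · simpa only [hc] using (hσ.indicator {i | i ∉ s}).div_const _
    · rw [tsum_congr hc, tsum_div_const, ← _root_.tsum_subtype, div_lt_one (by positivity)]
      exact hs_tail

lemma summable_rpow_of_summable_multinomialTerm_rpow {b : ι → ℝ} {σ : ℝ}
    (h : Summable fun ν => multinomialTerm b ν ^ σ) : Summable fun i => b i ^ σ := by
  simpa only [comp_def, multinomialTerm_single_one] using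
    h.comp_injective (Finsupp.single_left_injective one_ne_zero)

lemma tsum_lt_one_of_summable_multinomialTerm_rpow {b : ι → ℝ} (hb : ∀ i, 0 ≤ b i) {σ : ℝ}
    (hσ0 : 0 < σ) (hσ1 : σ ≤ 1) (h : Summable fun ν => multinomialTerm b ν ^ σ) :
    ∑' i, b i < 1 := by
  classical
  set T := ∑' ν, multinomialTerm b ν ^ σ
  have hnn : ∀ ν, 0 ≤ multinomialTerm b ν ^ σ :=
    fun ν => Real.rpow_nonneg (multinomialTerm_nonneg hb ν) σ
  have hT : 1 ≤ T := by
    simpa [multinomialTerm_zero] using h.le_tsum 0 fun ν _ => hnn ν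
  have hρ : 1 - T⁻¹ < 1 := sub_lt_self _ (inv_pos.2 (zero_lt_one.trans_le hT))
  have hsum : ∀ E : Finset ι, ∑ i ∈ E, b i ≤ 1 - T⁻¹ := fun E => by
    have hE : 0 ≤ ∑ i ∈ E, b i := sum_nonneg fun i _ => hb i
    have hr : (∑ i ∈ E, b i) ^ σ ≤ 1 - T⁻¹ := by
      refine le_one_sub_inv_of_sum_range_pow_le (Real.rpow_nonneg hE σ) fun N => ?_
      refine le_trans (sum_le_sum fun n _ => ?_) (sum_range_sum_finsuppAntidiag_le_tsum hnn h E N)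
      rw [Real.rpow_pow_comm hE, ← sum_finsuppAntidiag_multinomialTerm]
      exact Real.rpow_sum_le_sum_rpow (fun ν _ => multinomialTerm_nonneg hb ν) hσ0 hσ1
    have hlt : (∑ i ∈ E, b i) ^ σ < 1 := hr.trans_lt hρ
    have hE1 : ∑ i ∈ E, b i ≤ 1 := by
      by_contra! h1
      exact (Real.one_lt_rpow h1 hσ0).not_gt hlt
    exact (Real.self_le_rpow_of_le_one hE hE1 hσ1).trans hr
  exact (Real.tsum_le_of_sum_le hb hsum).trans_lt hρ

theorem summable_multinomialTerm_rpow_iff {b : ι → ℝ} (hb : ∀ i, 0 ≤ b i) {σ : ℝ}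
    (hσ0 : 0 < σ) (hσ1 : σ ≤ 1) :
    (Summable fun ν => multinomialTerm b ν ^ σ) ↔ ∑' i, b i < 1 ∧ Summable fun i => b i ^ σ :=
  ⟨fun h => ⟨tsum_lt_one_of_summable_multinomialTerm_rpow hb hσ0 hσ1 h,
    summable_rpow_of_summable_multinomialTerm_rpow h⟩,
   fun h => summable_multinomialTerm_rpow hb hσ0 hσ1 h.1 h.2⟩

/-- **Cohen–DeVore–Schwab summability criterion** (Theorem 7.2 of [CDS1]). For
`0 < σ < 1` and a nonnegative sequence `b`, the multiindexed sequence
`(|ν|!/ν!) b^ν` belongs to `ℓ^σ(𝓕)` iff `∑ₘ bₘ < 1` and `(bₘ) ∈ ℓ^σ(ℕ)`. -/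
theorem cds_summability (σ : ℝ) (hσ0 : 0 < σ) (hσ1 : σ < 1)
    (b : ℕ → ℝ) (hb : ∀ m, 0 ≤ b m) :
    (Summable fun ν : ℕ →₀ ℕ =>
        (((ν.sum fun _ n => n).factorial : ℝ) / (ν.prod fun _ n => (n.factorial : ℝ)) *
            ν.prod fun j n => b j ^ n) ^ σ) ↔
      ((∑' m, b m) < 1 ∧ Summable fun m => b m ^ σ) :=
  summable_multinomialTerm_rpow_iff hb hσ0 hσ1.le
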